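/- arXiv:2505.08386 — 3 statements merged into one kernel-verified Lean document; each statement's English description precedes it below -/
import Mathlib

section
/- Let E be a real inner product space, b₁,…,b_r ∈ E linearly independent with Gram–Schmidt vectors b_i^*, and let 1/4 < δ < 1. Suppose the basis is δ-LLL reduced. Fix 1 ≤ j ≤ k ≤ r, set β = k − j + 1 and R_i = ‖b_j^*‖/‖b_i^*‖ for j ≤ i ≤ k. Then the total qubit count n := Σ_{i=j}^{k} (⌊log₂ R_i⌋ + 1) satisfies n ≤ β − ⌊(β(β−1)/4) · log₂(δ − 1/4)⌋, where ⌊·⌋ is the integer floor and log₂ is the base-2 logarithm of a positive real. -/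
open scoped InnerProductSpace

/-- The Gram–Schmidt orthogonalization `b*` of a finite family `b : Fin r → E`
(Mathlib's `gramSchmidt`, specialized to the index type `Fin r` over `ℝ`):
`b*_i = b_i - ∑_{l<i} μ_{i,l} b*_l`. -/
noncomputable def gso {E : Type*} [NormedAddCommGroup E] [InnerProductSpace ℝ E]
    {r : ℕ} (b : Fin r → E) : Fin r → E :=
  @InnerProductSpace.gramSchmidt ℝ E _ _ _ (Fin r) _ _ (inferInstance : WellFoundedLT (Fin r)) b

/-- The Gram–Schmidt coefficient `μ_{i,l} = ⟪b_i, b*_l⟫ / ⟪b*_l, b*_l⟫`. -/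
noncomputable def gsCoeff {E : Type*} [NormedAddCommGroup E] [InnerProductSpace ℝ E]
    {r : ℕ} (b : Fin r → E) (i l : Fin r) : ℝ :=
  ⟪b i, gso b l⟫_ℝ / ⟪gso b l, gso b l⟫_ℝ

/-- A basis `b` is `δ`-LLL reduced if it is size-reduced (`|μ_{i,l}| ≤ 1/2` for `l < i`)
and satisfies the Lovász condition
`δ‖b*_{t}‖² ≤ ‖b*_{t+1} + μ_{t+1,t} b*_{t}‖²` for all `t+1 < r`. -/
def IsLLLReduced {E : Type*} [NormedAddCommGroup E] [InnerProductSpace ℝ E]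
    (δ : ℝ) {r : ℕ} (b : Fin r → E) : Prop :=
  (∀ i l : Fin r, l < i → |gsCoeff b i l| ≤ 1 / 2) ∧
  ∀ (t : ℕ) (ht : t + 1 < r),
    δ * ‖gso b ⟨t, Nat.lt_of_succ_lt ht⟩‖ ^ 2 ≤
      ‖gso b ⟨t + 1, ht⟩ +
        gsCoeff b ⟨t + 1, ht⟩ ⟨t, Nat.lt_of_succ_lt ht⟩ •
          gso b ⟨t, Nat.lt_of_succ_lt ht⟩‖ ^ 2

/-!
The size-reduction bound `|μ_{t+1,t}| ≤ 1/2` turns the Lovász condition into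
`(δ - 1/4) ‖b*_t‖² ≤ ‖b*_{t+1}‖²`, so `‖b*_i‖² ≥ (δ - 1/4)^(i-j) ‖b*_j‖²` and
`log₂ R_i ≤ (i - j) · (-log₂ (δ - 1/4)) / 2`. Summing over `i = j, …, k` gives
`Σ log₂ R_i ≤ -(β(β-1)/4) log₂ (δ - 1/4)`, and the floors only lose in our favour.
-/

open Finset

lemma inner_gso_eq_zero {E : Type*} [NormedAddCommGroup E] [InnerProductSpace ℝ E]
    {r : ℕ} (b : Fin r → E) {a c : Fin r} (h : a ≠ c) : ⟪gso b a, gso b c⟫_ℝ = 0 :=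
  InnerProductSpace.gramSchmidt_orthogonal ℝ b h

lemma gso_ne_zero {E : Type*} [NormedAddCommGroup E] [InnerProductSpace ℝ E]
    {r : ℕ} {b : Fin r → E} (hb : LinearIndependent ℝ b) (i : Fin r) : gso b i ≠ 0 :=
  InnerProductSpace.gramSchmidt_ne_zero i hb

lemma norm_add_smul_sq_le_of_inner_eq_zero {F : Type*} [NormedAddCommGroup F]
    [InnerProductSpace ℝ F] {u v : F} (h : ⟪v, u⟫_ℝ = 0) {μ : ℝ} (hμ : |μ| ≤ 1 / 2) :
    ‖v + μ • u‖ ^ 2 ≤ ‖v‖ ^ 2 + ‖u‖ ^ 2 / 4 := by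
  have hμ2 : μ ^ 2 ≤ 1 / 4 := by nlinarith [abs_nonneg μ, sq_abs μ]
  rw [norm_add_sq_real, real_inner_smul_right, h, norm_smul, Real.norm_eq_abs, mul_pow, sq_abs]
  nlinarith [sq_nonneg ‖u‖]

namespace IsLLLReduced

variable {E : Type*} [NormedAddCommGroup E] [InnerProductSpace ℝ E]
  {δ : ℝ} {r : ℕ} {b : Fin r → E}

lemma sub_quarter_mul_norm_sq_gso_le (hLLL : IsLLLReduced δ b) (t : ℕ) (ht : t + 1 < r) :
    (δ - 1 / 4) * ‖gso b ⟨t, Nat.lt_of_succ_lt ht⟩‖ ^ 2 ≤ ‖gso b ⟨t + 1, ht⟩‖ ^ 2 := by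
  have horth := inner_gso_eq_zero b (a := ⟨t + 1, ht⟩) (c := ⟨t, Nat.lt_of_succ_lt ht⟩)
    (by simp [Fin.ext_iff])
  have hsize := hLLL.1 ⟨t + 1, ht⟩ ⟨t, Nat.lt_of_succ_lt ht⟩ (Fin.mk_lt_mk.2 t.lt_succ_self)
  have := norm_add_smul_sq_le_of_inner_eq_zero horth hsize
  linarith [hLLL.2 t ht]

lemma pow_mul_norm_sq_gso_le (hδ : 1 / 4 ≤ δ) (hLLL : IsLLLReduced δ b) {i j : Fin r}
    (hji : j ≤ i) : (δ - 1 / 4) ^ ((i : ℕ) - j) * ‖gso b j‖ ^ 2 ≤ ‖gso b i‖ ^ 2 := by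
  suffices key : ∀ m (h : (j : ℕ) + m < r),
      (δ - 1 / 4) ^ m * ‖gso b j‖ ^ 2 ≤ ‖gso b ⟨j + m, h⟩‖ ^ 2 by
    rw [Fin.le_iff_val_le_val] at hji
    have := key ((i : ℕ) - j) (by omega)
    rwa [show (⟨j + (i - j), _⟩ : Fin r) = i from Fin.ext (by simp only; omega)] at this
  intro m
  induction m with
  | zero => simp
  | succ m ih =>
    intro h
    calc (δ - 1 / 4) ^ (m + 1) * ‖gso b j‖ ^ 2
        = (δ - 1 / 4) * ((δ - 1 / 4) ^ m * ‖gso b j‖ ^ 2) := by ring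
      _ ≤ (δ - 1 / 4) * ‖gso b ⟨j + m, by omega⟩‖ ^ 2 :=
          mul_le_mul_of_nonneg_left (ih _) (by linarith)
      _ ≤ ‖gso b ⟨j + (m + 1), h⟩‖ ^ 2 := hLLL.sub_quarter_mul_norm_sq_gso_le _ h

end IsLLLReduced

lemma Real.logb_div_le_of_pow_mul_sq_le {a c x y : ℝ} (ha : 1 < a) (hc : 0 < c) (hx : 0 < x)
    (hy : 0 < y) {m : ℕ} (h : c ^ m * x ^ 2 ≤ y ^ 2) :
    Real.logb a (x / y) ≤ m * (-Real.logb a c / 2) := by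
  have hlog := Real.logb_le_logb_of_le ha (by positivity) h
  rw [Real.logb_mul (by positivity) (by positivity), Real.logb_pow, Real.logb_pow,
    Real.logb_pow] at hlog
  rw [Real.logb_div hx.ne' hy.ne']
  push_cast at hlog
  linarith

lemma Fin.sum_Icc_val_sub {r : ℕ} {j k : Fin r} (hjk : j ≤ k) :
    ∑ i ∈ Icc j k, ((i : ℕ) - j) = ∑ m ∈ range ((k : ℕ) - j + 1), m := by
  rw [Fin.le_iff_val_le_val] at hjk
  calc ∑ i ∈ Icc j k, ((i : ℕ) - j) = ∑ n ∈ Icc (j : ℕ) k, (n - j) := by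
        rw [← Fin.map_valEmbedding_Icc, sum_map]; rfl
    _ = ∑ m ∈ range ((k : ℕ) - j + 1), m := by
        rw [← Ico_add_one_right_eq_Icc, sum_Ico_eq_sum_range,
          show (k : ℕ) + 1 - j = k - j + 1 by omega]
        simp

lemma Finset.sum_floor_le_neg_floor {ι : Type*} {s : Finset ι} {x : ι → ℝ} {a : ℝ}
    (h : ∑ i ∈ s, x i ≤ -a) : ∑ i ∈ s, ⌊x i⌋ ≤ -⌊a⌋ := by
  have hsum : ((∑ i ∈ s, ⌊x i⌋ : ℤ) : ℝ) ≤ -a := by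
    push_cast
    exact (sum_le_sum fun i _ => Int.floor_le (x i)).trans h
  calc ∑ i ∈ s, ⌊x i⌋ ≤ ⌊-a⌋ := Int.le_floor.2 hsum
    _ = -⌈a⌉ := Int.floor_neg
    _ ≤ -⌊a⌋ := neg_le_neg (Int.floor_le_ceil a)

theorem qubit_count_le_of_isLLLReduced_general
    {E : Type*} [NormedAddCommGroup E] [InnerProductSpace ℝ E]
    {r : ℕ} (b : Fin r → E) (hb : LinearIndependent ℝ b)
    (δ : ℝ) (hδ : 1 / 4 < δ) (hLLL : IsLLLReduced δ b)
    (j k : Fin r) (hjk : j ≤ k) (β : ℕ) (hβ : β = (k : ℕ) - (j : ℕ) + 1) :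
    ∑ i ∈ Finset.Icc j k, (⌊Real.logb 2 (‖gso b j‖ / ‖gso b i‖)⌋ + 1) ≤
      (β : ℤ) - ⌊(β : ℝ) * ((β : ℝ) - 1) / 4 * Real.logb 2 (δ - 1 / 4)⌋ := by
  have hα : 0 < δ - 1 / 4 := by linarith
  have hcard : #(Icc j k) = β := by rw [Fin.card_Icc]; omega
  have hgauss : ((∑ i ∈ Icc j k, ((i : ℕ) - j) : ℕ) : ℝ) * 2 = β * (β - 1) := by
    rw [Fin.sum_Icc_val_sub hjk, ← hβ]
    have hβ1 : 1 ≤ β := by omega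
    exact_mod_cast sum_range_id_mul_two β
  have hlog : ∑ i ∈ Icc j k, Real.logb 2 (‖gso b j‖ / ‖gso b i‖) ≤
      -((β : ℝ) * ((β : ℝ) - 1) / 4 * Real.logb 2 (δ - 1 / 4)) :=
    calc _ ≤ ∑ i ∈ Icc j k, (((i : ℕ) - j : ℕ) : ℝ) * (-Real.logb 2 (δ - 1 / 4) / 2) :=
          sum_le_sum fun i hi => Real.logb_div_le_of_pow_mul_sq_le one_lt_two hα
            (norm_pos_iff.2 (gso_ne_zero hb j)) (norm_pos_iff.2 (gso_ne_zero hb i))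
            (hLLL.pow_mul_norm_sq_gso_le hδ.le (mem_Icc.1 hi).1)
      _ = _ := by
          rw [← sum_mul]
          push_cast at hgauss ⊢
          linear_combination (-Real.logb 2 (δ - 1 / 4) / 4) * hgauss
  rw [sum_add_distrib, sum_const, hcard, nsmul_one]
  linarith [sum_floor_le_neg_floor hlog]

/-- If `b` is `δ`-LLL reduced with `1/4 < δ < 1`, `j ≤ k`,
`β = k - j + 1`, and `R_i = ‖b*_j‖ / ‖b*_i‖`, then the total qubit count
`n = ∑_{i=j}^{k} (⌊log₂ R_i⌋ + 1)` satisfies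
`n ≤ β - ⌊(β(β-1)/4) ⬝ log₂ (δ - 1/4)⌋`. -/
theorem qubit_count_le_of_isLLLReduced
    {E : Type*} [NormedAddCommGroup E] [InnerProductSpace ℝ E]
    {r : ℕ} (b : Fin r → E) (hb : LinearIndependent ℝ b)
    (δ : ℝ) (hδ : 1 / 4 < δ) (hδ' : δ < 1) (hLLL : IsLLLReduced δ b)
    (j k : Fin r) (hjk : j ≤ k) (β : ℕ) (hβ : β = (k : ℕ) - (j : ℕ) + 1) :
    ∑ i ∈ Finset.Icc j k, (⌊Real.logb 2 (‖gso b j‖ / ‖gso b i‖)⌋ + 1) ≤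
      (β : ℤ) - ⌊(β : ℝ) * ((β : ℝ) - 1) / 4 * Real.logb 2 (δ - 1 / 4)⌋ :=
  qubit_count_le_of_isLLLReduced_general b hb δ hδ hLLL j k hjk β hβ
end

section
/- Let E be a real inner product space and b₁,…,b_r ∈ E linearly independent with Gram–Schmidt vectors b_i^*. Suppose the basis is (3/4)-LLL reduced, so that in particular ‖b_i^*‖² ≥ (1/2)‖b_{i−1}^*‖² for all 1 < i ≤ r. Fix 1 ≤ j ≤ k ≤ r, set β = k − j + 1 and R_i = ‖b_j^*‖/‖b_i^*‖ for j ≤ i ≤ k. Then the total qubit count satisfies Σ_{i=j}^{k} (⌊log₂ R_i⌋ + 1) ≤ ⌊(β² + 3β)/4⌋. -/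
open scoped InnerProductSpace

/-!
Size reduction bounds `μ_{t+1,t}²` by `1/4`, and `b*_{t+1}` is orthogonal to `b*_t`, so the Lovász
condition gives `‖b*_{t+1}‖² ≥ (δ - 1/4) ‖b*_t‖²`. For `δ = 3/4` this yields
`R_i² ≤ 2^(i-j)`, i.e. `⌊log₂ R_i⌋ ≤ ⌊(i-j)/2⌋`, and `∑_{d<β} (⌊d/2⌋ + 1) = ⌊(β+1)²/4⌋`,
which is at most `⌊(β² + 3β)/4⌋` because `β ≥ 1`.
-/

open Finset

theorem logb_two_le_half_of_sq_le_two_pow {x : ℝ} {d : ℕ} (h : x ^ 2 ≤ 2 ^ d) :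
    Real.logb 2 x ≤ d / 2 := by
  rcases eq_or_ne x 0 with rfl | hx
  · simp only [Real.logb_zero]
    positivity
  · have h' := Real.logb_le_logb_of_le one_lt_two (by positivity) h
    rw [Real.logb_pow, Real.logb_pow, Real.logb_self_eq_one one_lt_two] at h'
    push_cast at h'
    linarith

theorem Nat.sum_range_div_two_add_one (n : ℕ) :
    ∑ d ∈ range n, (d / 2 + 1) = (n + 1) ^ 2 / 4 := by
  induction n with
  | zero => simp
  | succ m ih =>
    rw [sum_range_succ, ih]
    -- `q = t²` makes both squares linear in `t`, so that `omega` can compare the quotients.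
    rcases Nat.even_or_odd' m with ⟨t, rfl | rfl⟩
    · obtain ⟨q, h1, h2⟩ : ∃ q, (2 * t + 1) ^ 2 = 4 * q + 4 * t + 1 ∧
          (2 * t + 1 + 1) ^ 2 = 4 * q + 8 * t + 4 := ⟨t * t, by ring, by ring⟩
      omega
    · obtain ⟨q, h1, h2⟩ : ∃ q, (2 * t + 1 + 1) ^ 2 = 4 * q + 8 * t + 4 ∧
          (2 * t + 1 + 1 + 1) ^ 2 = 4 * q + 12 * t + 9 := ⟨t * t, by ring, by ring⟩
      omega

theorem Fin.sum_Icc_sub_div_two_add_one {r : ℕ} (j k : Fin r) :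
    ∑ i ∈ Icc j k, (((i : ℕ) - j) / 2 + 1) = ((k : ℕ) + 1 - j + 1) ^ 2 / 4 := by
  calc ∑ i ∈ Icc j k, (((i : ℕ) - j) / 2 + 1)
      = ∑ n ∈ Ico (j : ℕ) (k + 1), ((n - j) / 2 + 1) := by
        rw [Ico_add_one_right_eq_Icc, ← Fin.map_valEmbedding_Icc, sum_map]
        rfl
    _ = ((k : ℕ) + 1 - j + 1) ^ 2 / 4 := by
        rw [sum_Ico_eq_sum_range, ← Nat.sum_range_div_two_add_one]
        simp only [Nat.add_sub_cancel_left]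

namespace IsLLLReduced

variable {E : Type*} [NormedAddCommGroup E] [InnerProductSpace ℝ E] {r : ℕ} {b : Fin r → E}
  {δ : ℝ}

theorem mul_norm_gso_sq_le_succ (hb : IsLLLReduced δ b) (t : ℕ) (ht : t + 1 < r) :
    (δ - 1 / 4) * ‖gso b ⟨t, Nat.lt_of_succ_lt ht⟩‖ ^ 2 ≤ ‖gso b ⟨t + 1, ht⟩‖ ^ 2 := by
  have hlov := hb.2 t ht
  set x := gso b ⟨t + 1, ht⟩
  set y := gso b ⟨t, Nat.lt_of_succ_lt ht⟩
  set μ := gsCoeff b ⟨t + 1, ht⟩ ⟨t, Nat.lt_of_succ_lt ht⟩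
  have horth : ⟪x, y⟫_ℝ = 0 := InnerProductSpace.gramSchmidt_orthogonal ℝ b (by simp [Fin.ext_iff])
  rw [norm_add_sq_real, real_inner_smul_right, horth, mul_zero, mul_zero, add_zero, norm_smul,
    mul_pow, Real.norm_eq_abs, sq_abs] at hlov
  have hμ : μ ^ 2 ≤ 1 / 4 := by
    have := hb.1 ⟨t + 1, ht⟩ ⟨t, Nat.lt_of_succ_lt ht⟩ (by simp [Fin.lt_def])
    nlinarith [sq_abs μ, abs_nonneg μ]
  nlinarith [sq_nonneg ‖y‖]

theorem pow_mul_norm_gso_sq_le (hb : IsLLLReduced δ b) (hδ : 1 / 4 ≤ δ) {j i : Fin r}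
    (hji : j ≤ i) : (δ - 1 / 4) ^ ((i : ℕ) - j) * ‖gso b j‖ ^ 2 ≤ ‖gso b i‖ ^ 2 := by
  obtain ⟨d, hd⟩ := Nat.exists_eq_add_of_le (Fin.le_def.1 hji)
  induction d generalizing i with
  | zero => simp [Fin.ext_iff.2 hd]
  | succ d ih =>
    have ht : (j : ℕ) + d + 1 < r := hd ▸ i.isLt
    calc (δ - 1 / 4) ^ ((i : ℕ) - j) * ‖gso b j‖ ^ 2
        = (δ - 1 / 4) * ((δ - 1 / 4) ^ d * ‖gso b j‖ ^ 2) := by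
          rw [hd, Nat.add_sub_cancel_left, pow_succ]; ring
      _ ≤ (δ - 1 / 4) * ‖gso b ⟨j + d, Nat.lt_of_succ_lt ht⟩‖ ^ 2 := by
          refine mul_le_mul_of_nonneg_left ?_ (by linarith)
          simpa using ih (i := ⟨j + d, Nat.lt_of_succ_lt ht⟩) (Fin.le_def.2 (by simp)) rfl
      _ ≤ ‖gso b i‖ ^ 2 := by
          rw [show i = ⟨j + d + 1, ht⟩ from Fin.ext hd]
          exact hb.mul_norm_gso_sq_le_succ _ ht

theorem floor_logb_norm_gso_div_le (hb : IsLLLReduced (3 / 4) b) {j i : Fin r} (hji : j ≤ i) :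
    ⌊Real.logb 2 (‖gso b j‖ / ‖gso b i‖)⌋ ≤ (((i : ℕ) - j) / 2 : ℕ) := by
  have hdecay := hb.pow_mul_norm_gso_sq_le (by norm_num) hji
  have hsq : (‖gso b j‖ / ‖gso b i‖) ^ 2 ≤ 2 ^ ((i : ℕ) - j) := by
    rcases (norm_nonneg (gso b i)).eq_or_lt with hi | hi
    · simp [← hi]
    · rw [div_pow, div_le_iff₀ (by positivity)]
      rwa [show (3 / 4 : ℝ) - 1 / 4 = 2⁻¹ by norm_num, inv_pow,
        inv_mul_le_iff₀ (by positivity)] at hdecay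
  calc ⌊Real.logb 2 (‖gso b j‖ / ‖gso b i‖)⌋
      ≤ ⌊(((i : ℕ) - j : ℕ) : ℝ) / 2⌋ := Int.floor_mono (logb_two_le_half_of_sq_le_two_pow hsq)
    _ = (((i : ℕ) - j) / 2 : ℕ) := by
      rw [← Int.natCast_floor_eq_floor (by positivity), Nat.floor_div_ofNat, Nat.floor_natCast]

end IsLLLReduced

theorem qubit_count_le_of_isLLLReduced_three_quarters_general
    {E : Type*} [NormedAddCommGroup E] [InnerProductSpace ℝ E]
    {r : ℕ} (b : Fin r → E)
    (hLLL : IsLLLReduced (3 / 4) b)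
    (j k : Fin r) (β : ℕ) (hβ : β = (k : ℕ) - (j : ℕ) + 1) :
    ∑ i ∈ Finset.Icc j k, (⌊Real.logb 2 (‖gso b j‖ / ‖gso b i‖)⌋ + 1) ≤
      ⌊((β : ℝ) ^ 2 + 3 * (β : ℝ)) / 4⌋ := by
  set n := (k : ℕ) + 1 - j
  have hn : (n + 1) ^ 2 ≤ β ^ 2 + 3 * β := by
    have : n ≤ β := by omega
    nlinarith
  calc ∑ i ∈ Icc j k, (⌊Real.logb 2 (‖gso b j‖ / ‖gso b i‖)⌋ + 1)
      ≤ ∑ i ∈ Icc j k, ((((i : ℕ) - j) / 2 + 1 : ℕ) : ℤ) := by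
        refine sum_le_sum fun i hi ↦ ?_
        push_cast
        gcongr
        exact hLLL.floor_logb_norm_gso_div_le (mem_Icc.1 hi).1
    _ = (((n + 1) ^ 2 / 4 : ℕ) : ℤ) := by rw [← Nat.cast_sum, Fin.sum_Icc_sub_div_two_add_one]
    _ ≤ ⌊((β : ℝ) ^ 2 + 3 * (β : ℝ)) / 4⌋ := by
        rw [Int.le_floor, Int.cast_natCast]
        refine Nat.cast_div_le.trans (div_le_div_of_nonneg_right ?_ (by norm_num))
        exact_mod_cast hn

/-- If `b` is `(3/4)`-LLL reduced (so that in particular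
`‖b*_i‖² ≥ (1/2)‖b*_{i-1}‖²`), `j ≤ k`, `β = k - j + 1`, and `R_i = ‖b*_j‖ / ‖b*_i‖`,
then the total qubit count satisfies
`∑_{i=j}^{k} (⌊log₂ R_i⌋ + 1) ≤ ⌊(β² + 3β)/4⌋`. -/
theorem qubit_count_le_of_isLLLReduced_three_quarters
    {E : Type*} [NormedAddCommGroup E] [InnerProductSpace ℝ E]
    {r : ℕ} (b : Fin r → E) (hb : LinearIndependent ℝ b)
    (hLLL : IsLLLReduced (3 / 4) b)
    (j k : Fin r) (hjk : j ≤ k) (β : ℕ) (hβ : β = (k : ℕ) - (j : ℕ) + 1) :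
    ∑ i ∈ Finset.Icc j k, (⌊Real.logb 2 (‖gso b j‖ / ‖gso b i‖)⌋ + 1) ≤
      ⌊((β : ℝ) ^ 2 + 3 * (β : ℝ)) / 4⌋ :=
  qubit_count_le_of_isLLLReduced_three_quarters_general b hLLL j k β hβ
end

section
/- Let E be a real inner product space, b₁,…,b_r ∈ E linearly independent, and 1/4 < δ < 1. If the basis is δ-LLL reduced, then for every nonzero lattice vector v = Σ_{i=1}^r x_i b_i with x_i ∈ ℤ (not all zero), the first basis vector satisfies ‖b₁‖² ≤ (δ − 1/4)^{−(r−1)} ‖v‖². In particular, for δ = 3/4 this gives ‖b₁‖² ≤ 2^{r−1} λ₁², where λ₁ is the norm of a shortest nonzero lattice vector. -/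
open scoped InnerProductSpace

/-!
The Lovász condition together with `|μ_{t+1,t}| ≤ 1/2` gives
`(δ - 1/4) ‖b*_t‖² ≤ ‖b*_{t+1}‖²`, hence `(δ - 1/4)^k ‖b₁‖² ≤ ‖b*_k‖²` since `b*_1 = b₁`.
If `k` is the last index with `x_k ≠ 0`, then `⟪v, b*_k⟫ = x_k ‖b*_k‖²` with `|x_k| ≥ 1`,
so Cauchy–Schwarz gives `‖b*_k‖ ≤ ‖v‖`. As `δ - 1/4 ≤ 1`, the factor `(δ - 1/4)^{-k}` is at
most `(δ - 1/4)^{-(r-1)}`.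
-/

open InnerProductSpace Finset

theorem Function.exists_ne_zero_forall_lt_eq_zero {ι M : Type*} [Fintype ι] [LinearOrder ι]
    [Zero M] {x : ι → M} (hx : x ≠ 0) : ∃ k, x k ≠ 0 ∧ ∀ i, k < i → x i = 0 := by
  classical
  have hne : (univ.filter fun i => x i ≠ 0).Nonempty := by
    obtain ⟨i, hi⟩ := Function.ne_iff.mp hx
    exact ⟨i, by simpa using hi⟩
  refine ⟨_, (mem_filter.mp (max'_mem _ hne)).2, fun i hi => ?_⟩
  by_contra h
  exact (le_max' _ i (by simpa using h)).not_gt hi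

section

variable {E : Type*} [NormedAddCommGroup E] [InnerProductSpace ℝ E] {r : ℕ}

theorem gso_mk_zero (b : Fin r → E) (hr : 0 < r) : gso b ⟨0, hr⟩ = b ⟨0, hr⟩ := by
  have hIio : Iio (⟨0, hr⟩ : Fin r) = ∅ := Iio_eq_empty.mpr fun _ _ => Nat.zero_le _
  rw [gso, gramSchmidt_def, hIio, sum_empty, sub_zero]

theorem inner_gso_gso_of_ne (b : Fin r → E) {i j : Fin r} (h : i ≠ j) :
    ⟪gso b i, gso b j⟫_ℝ = 0 :=
  gramSchmidt_orthogonal ℝ b h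

theorem inner_gso_of_lt (b : Fin r → E) {i j : Fin r} (h : i < j) : ⟪b i, gso b j⟫_ℝ = 0 := by
  rw [real_inner_comm]
  exact gramSchmidt_inv_triangular ℝ b h

theorem inner_gso_self (b : Fin r → E) (i : Fin r) : ⟪b i, gso b i⟫_ℝ = ‖gso b i‖ ^ 2 := by
  change ⟪b i, gramSchmidt ℝ b i⟫_ℝ = ‖gramSchmidt ℝ b i‖ ^ 2
  nth_rewrite 1 [gramSchmidt_def'' ℝ b i]
  rw [inner_add_left, sum_inner, real_inner_self_eq_norm_sq, add_eq_left]
  refine sum_eq_zero fun l hl => ?_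
  rw [real_inner_smul_left, gramSchmidt_orthogonal ℝ b (mem_Iio.mp hl).ne, mul_zero]

theorem inner_sum_smul_gso_of_forall_lt (b : Fin r → E) (x : Fin r → ℝ) {k : Fin r}
    (hx : ∀ i, k < i → x i = 0) : ⟪∑ i, x i • b i, gso b k⟫_ℝ = x k * ‖gso b k‖ ^ 2 := by
  rw [sum_inner, sum_eq_single k, real_inner_smul_left, inner_gso_self]
  · intro i _ hik
    rcases lt_or_gt_of_ne hik with h | h
    · rw [real_inner_smul_left, inner_gso_of_lt b h, mul_zero]
    · rw [hx i h, zero_smul, inner_zero_left]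
  · simp

theorem sq_norm_add_smul_le_of_inner_eq_zero {u w : E} (h : ⟪w, u⟫_ℝ = 0) {c : ℝ}
    (hc : |c| ≤ 1 / 2) : ‖w + c • u‖ ^ 2 ≤ ‖w‖ ^ 2 + ‖u‖ ^ 2 / 4 := by
  have hc2 : c ^ 2 ≤ 1 / 4 := by
    rw [← sq_abs]
    nlinarith [abs_nonneg c]
  rw [norm_add_sq_real, real_inner_smul_right, h, norm_smul, mul_pow, Real.norm_eq_abs, sq_abs]
  nlinarith [sq_nonneg ‖u‖]

theorem norm_le_of_inner_eq_mul_sq {v g : E} {c : ℝ} (hc : 1 ≤ |c|)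
    (h : ⟪v, g⟫_ℝ = c * ‖g‖ ^ 2) : ‖g‖ ≤ ‖v‖ := by
  rcases (norm_nonneg g).eq_or_lt with hg | hg
  · rw [← hg]
    exact norm_nonneg v
  refine le_of_mul_le_mul_right ?_ hg
  calc ‖g‖ * ‖g‖ ≤ |c| * ‖g‖ ^ 2 := by nlinarith
    _ = |⟪v, g⟫_ℝ| := by rw [h, abs_mul, abs_of_nonneg (sq_nonneg ‖g‖)]
    _ ≤ ‖v‖ * ‖g‖ := abs_real_inner_le_norm v g

theorem norm_gso_le_norm_sum_intCast_smul (b : Fin r → E) (x : Fin r → ℤ) {k : Fin r} (hk : x k ≠ 0)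
    (hx : ∀ i, k < i → x i = 0) : ‖gso b k‖ ≤ ‖∑ i, (x i : ℝ) • b i‖ := by
  have hxk : (1 : ℝ) ≤ |(x k : ℝ)| := by exact_mod_cast Int.one_le_abs hk
  have hinner := inner_sum_smul_gso_of_forall_lt b (fun i => (x i : ℝ)) (k := k)
    fun i hi => by simp [hx i hi]
  exact norm_le_of_inner_eq_mul_sq hxk hinner

end

namespace IsLLLReduced

variable {E : Type*} [NormedAddCommGroup E] [InnerProductSpace ℝ E] {r : ℕ} {δ : ℝ}
  {b : Fin r → E}

theorem mul_sq_norm_gso_le_succ (h : IsLLLReduced δ b) (t : ℕ) (ht : t + 1 < r) :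
    (δ - 1 / 4) * ‖gso b ⟨t, by omega⟩‖ ^ 2 ≤ ‖gso b ⟨t + 1, ht⟩‖ ^ 2 := by
  have hsize := h.1 ⟨t + 1, ht⟩ ⟨t, by omega⟩ (Fin.mk_lt_mk.mpr t.lt_succ_self)
  have horth := inner_gso_gso_of_ne b (i := ⟨t + 1, ht⟩) (j := ⟨t, by omega⟩) (by simp)
  have := sq_norm_add_smul_le_of_inner_eq_zero horth hsize
  linarith [h.2 t ht]

theorem pow_mul_sq_norm_gso_zero_le (h : IsLLLReduced δ b) (hδ : 1 / 4 ≤ δ) (n : ℕ)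
    (hn : n < r) : (δ - 1 / 4) ^ n * ‖gso b ⟨0, by omega⟩‖ ^ 2 ≤ ‖gso b ⟨n, hn⟩‖ ^ 2 := by
  induction n with
  | zero => simp
  | succ m ih =>
    calc (δ - 1 / 4) ^ (m + 1) * ‖gso b ⟨0, by omega⟩‖ ^ 2
        = (δ - 1 / 4) * ((δ - 1 / 4) ^ m * ‖gso b ⟨0, by omega⟩‖ ^ 2) := by ring
      _ ≤ (δ - 1 / 4) * ‖gso b ⟨m, by omega⟩‖ ^ 2 :=
        mul_le_mul_of_nonneg_left (ih (by omega)) (by linarith)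
      _ ≤ ‖gso b ⟨m + 1, hn⟩‖ ^ 2 := h.mul_sq_norm_gso_le_succ m hn

theorem sq_norm_first_le_inv_pow_mul (h : IsLLLReduced δ b) (hr : 0 < r) (hδ : 1 / 4 < δ)
    (hδ' : δ < 1) (x : Fin r → ℤ) (hx : x ≠ 0) :
    ‖b ⟨0, hr⟩‖ ^ 2 ≤ ((δ - 1 / 4) ^ (r - 1))⁻¹ * ‖∑ i, (x i : ℝ) • b i‖ ^ 2 := by
  obtain ⟨k, hk, hlast⟩ := Function.exists_ne_zero_forall_lt_eq_zero hx
  have ha : 0 < δ - 1 / 4 := by linarith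
  have hpow : (δ - 1 / 4) ^ (r - 1) ≤ (δ - 1 / 4) ^ (k : ℕ) :=
    pow_le_pow_of_le_one ha.le (by linarith) (by omega)
  calc ‖b ⟨0, hr⟩‖ ^ 2 = ‖gso b ⟨0, hr⟩‖ ^ 2 := by rw [gso_mk_zero]
    _ ≤ ((δ - 1 / 4) ^ (k : ℕ))⁻¹ * ‖gso b k‖ ^ 2 := by
      rw [inv_mul_eq_div, le_div_iff₀' (pow_pos ha _)]
      exact h.pow_mul_sq_norm_gso_zero_le hδ.le k k.isLt
    _ ≤ ((δ - 1 / 4) ^ (k : ℕ))⁻¹ * ‖∑ i, (x i : ℝ) • b i‖ ^ 2 := by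
      gcongr
      exact norm_gso_le_norm_sum_intCast_smul b x hk hlast
    _ ≤ ((δ - 1 / 4) ^ (r - 1))⁻¹ * ‖∑ i, (x i : ℝ) • b i‖ ^ 2 := by
      gcongr

end IsLLLReduced

theorem sq_norm_first_le_of_isLLLReduced_general
    {E : Type*} [NormedAddCommGroup E] [InnerProductSpace ℝ E]
    {r : ℕ} (hr : 0 < r) (b : Fin r → E)
    (δ : ℝ) (hδ : 1 / 4 < δ) (hδ' : δ < 1) (hLLL : IsLLLReduced δ b)
    (x : Fin r → ℤ) (hx : x ≠ 0) :
    ‖b ⟨0, hr⟩‖ ^ 2 ≤ ((δ - 1 / 4) ^ (r - 1))⁻¹ * ‖∑ i, (x i : ℝ) • b i‖ ^ 2 ∧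
    (δ = 3 / 4 → ‖b ⟨0, hr⟩‖ ^ 2 ≤ 2 ^ (r - 1) * ‖∑ i, (x i : ℝ) • b i‖ ^ 2) := by
  have hmain := hLLL.sq_norm_first_le_inv_pow_mul hr hδ hδ' x hx
  refine ⟨hmain, fun hδ34 => ?_⟩
  have hinv : ((3 / 4 - 1 / 4 : ℝ) ^ (r - 1))⁻¹ = 2 ^ (r - 1) := by
    rw [← inv_pow]
    norm_num
  rwa [hδ34, hinv] at hmain

/-- If `b` is `δ`-LLL reduced with `1/4 < δ < 1`, then for every
nonzero lattice vector `v = ∑ x_i b_i` (`x_i ∈ ℤ`, not all zero) the first basis vector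
satisfies `‖b_1‖² ≤ (δ - 1/4)^{-(r-1)} ‖v‖²`; in particular, for `δ = 3/4` this gives
`‖b_1‖² ≤ 2^{r-1} ‖v‖²` (hence `‖b_1‖² ≤ 2^{r-1} λ₁²`). -/
theorem sq_norm_first_le_of_isLLLReduced
    {E : Type*} [NormedAddCommGroup E] [InnerProductSpace ℝ E]
    {r : ℕ} (hr : 0 < r) (b : Fin r → E) (hb : LinearIndependent ℝ b)
    (δ : ℝ) (hδ : 1 / 4 < δ) (hδ' : δ < 1) (hLLL : IsLLLReduced δ b)
    (x : Fin r → ℤ) (hx : x ≠ 0) :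
    ‖b ⟨0, hr⟩‖ ^ 2 ≤ ((δ - 1 / 4) ^ (r - 1))⁻¹ * ‖∑ i, (x i : ℝ) • b i‖ ^ 2 ∧
    (δ = 3 / 4 → ‖b ⟨0, hr⟩‖ ^ 2 ≤ 2 ^ (r - 1) * ‖∑ i, (x i : ℝ) • b i‖ ^ 2) :=
  sq_norm_first_le_of_isLLLReduced_general hr b δ hδ hδ' hLLL x hx
end
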